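/- arXiv:math/0509455 — 10 statements merged into one kernel-verified Lean document; each statement's English description precedes it below -/
import Mathlib

section
/- Let λ: V(G) → {0,1}^d be an injection for a graph G. Two distinct edges vw and xy of G cross (i.e., the open line-segments with endpoints λ(v),λ(w) and λ(x),λ(y) intersect) if and only if λ(v)+λ(w) = λ(x)+λ(y) (coordinatewise sum in ℤ^d). -/
/-- Given an injection `λ : V(G) → {0,1}^d`, two distinct edges `vw` and `xy` cross
(their open line-segments intersect) if and only if `λ(v)+λ(w) = λ(x)+λ(y)`. -/
theorem crossing_iff_sum_eq {V : Type*} (G : SimpleGraph V) (d : ℕ) (l : V → Fin d → ℝ)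
    (h01 : ∀ v i, l v i = 0 ∨ l v i = 1) (hinj : Function.Injective l)
    (v w x y : V) (hvw : G.Adj v w) (hxy : G.Adj x y) (hne : s(v, w) ≠ s(x, y)) :
    (openSegment ℝ (l v) (l w) ∩ openSegment ℝ (l x) (l y)).Nonempty ↔
      l v + l w = l x + l y := by
  constructor
  · rintro ⟨p, ⟨a, b, ha, hb, hab, hp1⟩, ⟨c, e, hc, he, hce, hp2⟩⟩
    funext i
    have h1 : a * l v i + b * l w i = p i := congrFun hp1 i
    have h2 : c * l x i + e * l y i = p i := congrFun hp2 i
    have goal : l v i + l w i = l x i + l y i := by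
      rcases h01 v i with hv | hv <;> rcases h01 w i with hw | hw <;>
        rcases h01 x i with hx | hx <;> rcases h01 y i with hy | hy <;>
        rw [hv, hw, hx, hy] <;> nlinarith
    simpa using goal
  · rintro h
    refine ⟨(1/2 : ℝ) • (l v + l w), ⟨1/2, 1/2, by norm_num, by norm_num, by norm_num, ?_⟩,
      ⟨1/2, 1/2, by norm_num, by norm_num, by norm_num, ?_⟩⟩
    · module
    · rw [h]; module
end

section
/- Every graph G satisfies VOL(G) ≤ 2^⌈log₂ MAG(G)⌉ < 2·MAG(G). That is, given an antimagic injection of G into {1,...,k}, mapping each vertex to the ⌈log₂ k⌉-bit binary representation of its label yields a hypercube drawing of G in dimension ⌈log₂ k⌉. -/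
open Finset

/-- A `d`-dimensional hypercube drawing of a graph `G`: an injection of the vertices
into `{0,1}^d ⊆ ℝ^d` such that the open line-segments representing distinct edges
do not cross. -/
def IsHypercubeDrawing {V : Type*} (G : SimpleGraph V) (d : ℕ) (l : V → Fin d → ℝ) : Prop :=
  (∀ v i, l v i = 0 ∨ l v i = 1) ∧ Function.Injective l ∧
    ∀ v w x y : V, G.Adj v w → G.Adj x y → s(v, w) ≠ s(x, y) →
      ¬ (openSegment ℝ (l v) (l w) ∩ openSegment ℝ (l x) (l y)).Nonempty

/-- `VOL G`: the minimum volume `2^d` of a hypercube drawing of `G`. -/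
noncomputable def VOL {V : Type*} (G : SimpleGraph V) : ℕ :=
  sInf {N | ∃ d, ∃ l : V → Fin d → ℝ, N = 2 ^ d ∧ IsHypercubeDrawing G d l}

/-- An injection `f : V(G) → ℤ⁺` is antimagic if distinct edges have distinct label sums. -/
def IsAntimagic {V : Type*} (G : SimpleGraph V) (f : V → ℕ) : Prop :=
  ∀ v w x y : V, G.Adj v w → G.Adj x y → s(v, w) ≠ s(x, y) → f v + f w ≠ f x + f y

/-- `MAG G`: the minimum `k` such that `G` has an antimagic injection into `{1,…,k}`. -/
noncomputable def MAG {V : Type*} (G : SimpleGraph V) : ℕ :=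
  sInf {k | ∃ f : V → ℕ, Function.Injective f ∧ (∀ v, f v ∈ Finset.Icc 1 k) ∧ IsAntimagic G f}

/-!
Write the label `f v - 1 ∈ [0, 2^d)` of an antimagic labelling in binary and place `v` at the
vertex of `{0,1}^d` given by its bits. If two open edge segments between cube vertices meet, then in
every coordinate both edges either stay at the same value or both cross between `0` and `1`, so the
two edges have equal coordinatewise sums; reading these sums in base two gives equal label sums,
which antimagicness forbids. On a finite graph `MAG` is attained, e.g. because the labels `2^i`
are antimagic: a sum of two distinct powers of two determines them through its binary digits.
-/

lemma Real.add_eq_add_of_openSegment_inter_nonempty {a b c d : ℝ}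
    (ha : a = 0 ∨ a = 1) (hb : b = 0 ∨ b = 1) (hc : c = 0 ∨ c = 1) (hd : d = 0 ∨ d = 1)
    (h : (openSegment ℝ a b ∩ openSegment ℝ c d).Nonempty) : a + b = c + d := by
  obtain ⟨p, hab, hcd⟩ := h
  rcases ha with rfl | rfl <;> rcases hb with rfl | rfl <;> rcases hc with rfl | rfl <;>
    rcases hd with rfl | rfl <;>
    simp_all [openSegment_same, openSegment_eq_Ioo, openSegment_symm ℝ (1 : ℝ) 0]

lemma Pi.add_eq_add_of_openSegment_inter_nonempty {ι : Type*} {a b c d : ι → ℝ}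
    (ha : ∀ i, a i = 0 ∨ a i = 1) (hb : ∀ i, b i = 0 ∨ b i = 1)
    (hc : ∀ i, c i = 0 ∨ c i = 1) (hd : ∀ i, d i = 0 ∨ d i = 1)
    (h : (openSegment ℝ a b ∩ openSegment ℝ c d).Nonempty) : a + b = c + d := by
  obtain ⟨p, hab, hcd⟩ := h
  funext i
  exact Real.add_eq_add_of_openSegment_inter_nonempty (ha i) (hb i) (hc i) (hd i)
    ⟨p i, Pi.openSegment_subset (s := Set.univ) a b hab i trivial,
      Pi.openSegment_subset (s := Set.univ) c d hcd i trivial⟩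

lemma Nat.sum_range_ite_testBit {d m : ℕ} (hm : m < 2 ^ d) :
    ∑ i ∈ range d, (if m.testBit i then 2 ^ i else 0) = m := by
  have h : m.bitIndices.toFinset = (range d).filter (m.testBit ·) := by
    ext i
    simp only [List.mem_toFinset, Nat.mem_bitIndices, mem_filter, mem_range, iff_and_self]
    intro hi
    exact (Nat.pow_lt_pow_iff_right (by norm_num)).1 ((Nat.ge_two_pow_of_testBit hi).trans_lt hm)
  rw [← sum_filter, ← h, Finset.sum_toFinset_bitIndices_two_pow]

def binaryVertex (d m : ℕ) : Fin d → ℝ := fun i => if m.testBit i then 1 else 0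

lemma binaryVertex_eq_zero_or_one (d m : ℕ) (i : Fin d) :
    binaryVertex d m i = 0 ∨ binaryVertex d m i = 1 := by
  unfold binaryVertex
  split_ifs <;> simp

lemma sum_binaryVertex_mul_two_pow {d m : ℕ} (hm : m < 2 ^ d) :
    ∑ i : Fin d, binaryVertex d m i * 2 ^ (i : ℕ) = m := by
  have := congrArg (Nat.cast (R := ℝ)) (Nat.sum_range_ite_testBit hm)
  push_cast [Nat.cast_ite] at this
  simpa only [binaryVertex, ite_mul, one_mul, zero_mul, Fin.sum_univ_eq_sum_range
    (fun i => if m.testBit i then (2 : ℝ) ^ i else 0)] using this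

lemma binaryVertex_injOn (d : ℕ) : Set.InjOn (binaryVertex d) (Set.Iio (2 ^ d)) := by
  intro m hm n hn h
  have := sum_binaryVertex_mul_two_pow hn
  rw [← h, sum_binaryVertex_mul_two_pow hm] at this
  exact_mod_cast this

lemma add_eq_add_of_binaryVertex_add_eq {d m n p q : ℕ} (hm : m < 2 ^ d) (hn : n < 2 ^ d)
    (hp : p < 2 ^ d) (hq : q < 2 ^ d)
    (h : binaryVertex d m + binaryVertex d n = binaryVertex d p + binaryVertex d q) :
    m + n = p + q := by
  have := congrArg (fun x : Fin d → ℝ => ∑ i, x i * 2 ^ (i : ℕ)) h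
  simp only [Pi.add_apply, add_mul, sum_add_distrib, sum_binaryVertex_mul_two_pow hm,
    sum_binaryVertex_mul_two_pow hn, sum_binaryVertex_mul_two_pow hp,
    sum_binaryVertex_mul_two_pow hq] at this
  exact_mod_cast this

lemma isHypercubeDrawing_binaryVertex {V : Type*} (G : SimpleGraph V) {d : ℕ} {f : V → ℕ}
    (hf : Function.Injective f) (hlt : ∀ v, f v < 2 ^ d) (hanti : IsAntimagic G f) :
    IsHypercubeDrawing G d (fun v => binaryVertex d (f v)) := by
  refine ⟨fun v => binaryVertex_eq_zero_or_one d (f v),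
    fun v w h => hf (binaryVertex_injOn d (hlt v) (hlt w) h), ?_⟩
  intro v w x y hvw hxy hne hcross
  apply hanti v w x y hvw hxy hne
  exact add_eq_add_of_binaryVertex_add_eq (hlt v) (hlt w) (hlt x) (hlt y)
    (Pi.add_eq_add_of_openSegment_inter_nonempty (binaryVertex_eq_zero_or_one d _)
      (binaryVertex_eq_zero_or_one d _) (binaryVertex_eq_zero_or_one d _)
      (binaryVertex_eq_zero_or_one d _) hcross)

lemma IsAntimagic.sub_one {V : Type*} {G : SimpleGraph V} {f : V → ℕ} (hanti : IsAntimagic G f)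
    (hpos : ∀ v, 1 ≤ f v) : IsAntimagic G (fun v => f v - 1) := by
  intro v w x y hvw hxy hne hsum
  apply hanti v w x y hvw hxy hne
  have := hpos v; have := hpos w; have := hpos x; have := hpos y
  dsimp only at hsum
  omega

lemma vol_le_two_pow_clog_of_isAntimagic {V : Type*} (G : SimpleGraph V) {k : ℕ} {f : V → ℕ}
    (hf : Function.Injective f) (hrange : ∀ v, f v ∈ Icc 1 k) (hanti : IsAntimagic G f) :
    VOL G ≤ 2 ^ Nat.clog 2 k := by
  have hpos v : 1 ≤ f v := (mem_Icc.1 (hrange v)).1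
  have hlt v : f v - 1 < 2 ^ Nat.clog 2 k :=
    (Nat.sub_lt (hpos v) one_pos).trans_le
      ((mem_Icc.1 (hrange v)).2.trans (Nat.le_pow_clog one_lt_two k))
  have hinj : Function.Injective (fun v => f v - 1) := fun v w h =>
    hf (by have := hpos v; have := hpos w; dsimp only at h; omega)
  exact Nat.sInf_le ⟨_, _, rfl, isHypercubeDrawing_binaryVertex G hinj hlt (hanti.sub_one hpos)⟩

lemma isAntimagic_two_pow {V : Type*} (G : SimpleGraph V) {e : V → ℕ}
    (he : Function.Injective e) : IsAntimagic G (fun v => 2 ^ e v) := by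
  have sum_pair {v w : V} (h : G.Adj v w) :
      2 ^ e v + 2 ^ e w = ∑ i ∈ (Sym2.map e s(v, w)).toFinset, 2 ^ i := by
    rw [Sym2.map_mk, Sym2.toFinset_mk_eq, sum_pair (he.ne h.ne)]
  intro v w x y hvw hxy hne hsum
  apply hne
  apply Sym2.map.injective he
  apply Sym2.ext
  intro i
  rw [← Sym2.mem_toFinset, ← Sym2.mem_toFinset,
    Finset.geomSum_injective le_rfl ((sum_pair hvw).symm.trans (hsum.trans (sum_pair hxy)))]

lemma exists_isAntimagic_mem_Icc (V : Type*) [Fintype V] (G : SimpleGraph V) :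
    ∃ f : V → ℕ, Function.Injective f ∧ (∀ v, f v ∈ Icc 1 (2 ^ Fintype.card V)) ∧
      IsAntimagic G f := by
  let e : V → ℕ := fun v => Fintype.equivFin V v
  have he : Function.Injective e := Fin.val_injective.comp (Fintype.equivFin V).injective
  refine ⟨fun v => 2 ^ e v, (Nat.pow_right_injective le_rfl).comp he, fun v => ?_,
    isAntimagic_two_pow G he⟩
  exact mem_Icc.2 ⟨Nat.one_le_two_pow, Nat.pow_le_pow_right two_pos (Fintype.equivFin V v).2.le⟩

lemma exists_isAntimagic_mem_Icc_mag {V : Type*} [Fintype V] (G : SimpleGraph V) :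
    ∃ f : V → ℕ, Function.Injective f ∧ (∀ v, f v ∈ Icc 1 (MAG G)) ∧
      IsAntimagic G f :=
  Nat.sInf_mem (s := {k | ∃ f : V → ℕ, Function.Injective f ∧ (∀ v, f v ∈ Icc 1 k) ∧
    IsAntimagic G f}) ⟨_, exists_isAntimagic_mem_Icc V G⟩

lemma Nat.pow_clog_lt_mul {b n : ℕ} (hb : 1 < b) (hn : 1 ≤ n) : b ^ Nat.clog b n < b * n := by
  rcases hn.eq_or_lt with rfl | hn
  · simpa [Nat.clog_one_right] using hb
  · calc b ^ Nat.clog b n = b * b ^ (Nat.clog b n).pred := by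
          rw [← pow_succ', Nat.succ_pred_eq_of_pos (Nat.clog_pos hb hn)]
      _ < b * n := Nat.mul_lt_mul_of_pos_left (Nat.pow_pred_clog_lt_self hb hn) (by omega)

/-- Every graph `G` satisfies `VOL(G) ≤ 2^⌈log₂ MAG(G)⌉ < 2 · MAG(G)`. -/
theorem vol_le_two_pow_clog_mag {V : Type*} [Fintype V] [Nonempty V] (G : SimpleGraph V) :
    VOL G ≤ 2 ^ Nat.clog 2 (MAG G) ∧ 2 ^ Nat.clog 2 (MAG G) < 2 * MAG G := by
  obtain ⟨f, hf, hrange, hanti⟩ := exists_isAntimagic_mem_Icc_mag G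
  obtain ⟨hv, hk⟩ := mem_Icc.1 (hrange (Classical.arbitrary V))
  exact ⟨vol_le_two_pow_clog_of_isAntimagic G hf hrange hanti,
    Nat.pow_clog_lt_mul one_lt_two (hv.trans hk)⟩
end

section
/- Every graph G satisfies MAG(G) ≤ VOL(G)^{log₂ 3}. Specifically, given a d-dimensional hypercube drawing λ of G, interpreting each λ(v) ∈ {0,1}^d as the base-3 representation of an integer f(v) yields an antimagic injection of G into {1,...,3^d}. -/
open Finset

lemma digits_unique : ∀ (d : ℕ) (a c : ℕ → ℕ), (∀ i, a i < 3) → (∀ i, c i < 3) →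
    (∑ i ∈ range d, a i * 3 ^ i = ∑ i ∈ range d, c i * 3 ^ i) → ∀ i < d, a i = c i := by
  intro d
  induction d with
  | zero => intro a c _ _ _ i hi; omega
  | succ d ih =>
    intro a c ha hc h i hi
    rw [Finset.sum_range_succ', Finset.sum_range_succ'] at h
    have e1 : ∀ (f : ℕ → ℕ), ∑ i ∈ range d, f (i+1) * 3 ^ (i+1)
        = 3 * ∑ i ∈ range d, f (i+1) * 3 ^ i := by
      intro f
      rw [Finset.mul_sum]
      apply Finset.sum_congr rfl
      intro j _
      ring
    rw [e1 a, e1 c] at h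
    simp only [pow_zero, mul_one] at h
    have h0 : a 0 = c 0 ∧ ∑ i ∈ range d, a (i+1) * 3 ^ i = ∑ i ∈ range d, c (i+1) * 3 ^ i := by
      have := ha 0; have := hc 0; omega
    rcases i with _ | j
    · exact h0.1
    · exact ih (fun i => a (i+1)) (fun i => c (i+1)) (fun i => ha _) (fun i => hc _) h0.2 j
        (by omega)

lemma sum_lt_pow : ∀ (d : ℕ) (a : ℕ → ℕ), (∀ i, a i ≤ 2) →
    ∑ i ∈ range d, a i * 3 ^ i < 3 ^ d := by
  intro d
  induction d with
  | zero => intro a _; simp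
  | succ d ih =>
    intro a ha
    rw [Finset.sum_range_succ, pow_succ]
    have h1 := ih a ha
    have h2 : a d * 3 ^ d ≤ 2 * 3 ^ d := Nat.mul_le_mul_right _ (ha d)
    omega

lemma exists_drawing {V : Type*} [Fintype V] (G : SimpleGraph V) :
    ∃ l : V → Fin (Fintype.card V) → ℝ,
      IsHypercubeDrawing G (Fintype.card V) l := by
  set n := Fintype.card V
  let e : V ≃ Fin n := Fintype.equivFin V
  refine ⟨fun v i => if i = e v then 1 else 0, ?_, ?_, ?_⟩
  · intro v i; dsimp only; split <;> simp
  · intro v w h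
    have := congrFun h (e v)
    simp only [if_pos rfl] at this
    by_contra hvw
    have hne : e v ≠ e w := fun h' => hvw (e.injective h')
    rw [if_neg hne] at this
    norm_num at this
  · rintro v w x y hvw hxy hne ⟨p, hp1, hp2⟩
    obtain ⟨a, b, ha, hb, hab, hs1⟩ := hp1
    obtain ⟨a', b', ha', hb', hab', hs2⟩ := hp2
    have hvwne : v ≠ w := hvw.ne
    have hxyne : x ≠ y := hxy.ne
    have key : ∀ u : V, u = v ∨ u = w → u = x ∨ u = y := by
      intro u hu
      have hpos : 0 < p (e u) := by
        rw [← hs1]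
        simp only [Pi.add_apply, Pi.smul_apply, smul_eq_mul]
        rcases hu with rfl | rfl
        · have h1 : e u ≠ e w := fun h' => hvwne (e.injective h')
          simp [h1]
          nlinarith
        · have h1 : e u ≠ e v := fun h' => hvwne ((e.injective h').symm)
          simp [h1]
          nlinarith
      by_contra hcon
      push_neg at hcon
      have h1 : e u ≠ e x := fun h' => hcon.1 (e.injective h')
      have h2 : e u ≠ e y := fun h' => hcon.2 (e.injective h')
      rw [← hs2] at hpos
      simp only [Pi.add_apply, Pi.smul_apply, smul_eq_mul, if_neg h1, if_neg h2] at hpos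
      norm_num at hpos
    apply hne
    rcases key v (Or.inl rfl) with rfl | rfl
    · rcases key w (Or.inr rfl) with rfl | rfl
      · exact absurd rfl hvwne
      · rfl
    · rcases key w (Or.inr rfl) with rfl | rfl
      · exact Sym2.eq_swap
      · exact absurd rfl hvwne

/-- Every graph `G` satisfies `MAG(G) ≤ VOL(G) ^ (log₂ 3)`. -/
theorem mag_le_vol_rpow {V : Type*} [Fintype V] (G : SimpleGraph V) :
    (MAG G : ℝ) ≤ (VOL G : ℝ) ^ (Real.logb 2 3) := by
  -- the defining set of VOL is nonempty
  have hne : {N | ∃ d, ∃ l : V → Fin d → ℝ, N = 2 ^ d ∧ IsHypercubeDrawing G d l}.Nonempty := by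
    obtain ⟨l, hl⟩ := exists_drawing G
    exact ⟨2 ^ Fintype.card V, Fintype.card V, l, rfl, hl⟩
  obtain ⟨d, l, hVOL, h01, hinj, hcross⟩ := Nat.sInf_mem hne
  rw [show sInf {N | ∃ d, ∃ l : V → Fin d → ℝ, N = 2 ^ d ∧ IsHypercubeDrawing G d l} = VOL G
      from rfl] at hVOL
  -- digits
  set D : V → ℕ → ℕ := fun v i => if h : i < d then (if l v ⟨i, h⟩ = 1 then 1 else 0) else 0
    with hD
  have hDle : ∀ v i, D v i ≤ 1 := by
    intro v i; rw [hD]; dsimp only; split_ifs <;> omega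
  have hDreal : ∀ (v : V) (i : Fin d), (D v (i : ℕ) : ℝ) = l v i := by
    intro v i
    rw [hD]
    dsimp only
    rw [dif_pos i.isLt]
    rcases h01 v i with h | h <;> simp [h]
  set f : V → ℕ := fun v => 1 + ∑ i ∈ range d, D v i * 3 ^ i with hf
  -- f v = f w → l v = l w
  have hDeq : ∀ v w : V,
      (∑ i ∈ range d, D v i * 3 ^ i = ∑ i ∈ range d, D w i * 3 ^ i) → v = w := by
    intro v w h
    apply hinj
    funext i
    have := digits_unique d (D v) (D w) (fun i => by have := hDle v i; omega)
      (fun i => by have := hDle w i; omega) h (i : ℕ) i.isLt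
    rw [← hDreal v i, ← hDreal w i, this]
  have hMAG : MAG G ≤ 3 ^ d := by
    apply Nat.sInf_le
    have hfe : ∀ u : V, f u = 1 + ∑ i ∈ range d, D u i * 3 ^ i := fun u => rfl
    refine ⟨f, ?_, ?_, ?_⟩
    · intro v w h
      rw [hfe, hfe] at h
      exact hDeq v w (by omega)
    · intro v
      rw [Finset.mem_Icc, hfe]
      refine ⟨by omega, ?_⟩
      have := sum_lt_pow d (D v) (fun i => by have := hDle v i; omega)
      omega
    · intro v w x y hvw hxy hsne heq
      apply hcross v w x y hvw hxy hsne
      -- the sums of digit vectors agree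
      have hsum : ∑ i ∈ range d, (D v i + D w i) * 3 ^ i
          = ∑ i ∈ range d, (D x i + D y i) * 3 ^ i := by
        rw [hfe, hfe, hfe, hfe] at heq
        have e1 : ∀ p q : V, ∑ i ∈ range d, (D p i + D q i) * 3 ^ i
            = ∑ i ∈ range d, D p i * 3 ^ i + ∑ i ∈ range d, D q i * 3 ^ i := by
          intro p q
          rw [← Finset.sum_add_distrib]
          exact Finset.sum_congr rfl fun j _ => by ring
        rw [e1, e1]
        omega
      have hpt : ∀ i : Fin d, l v i + l w i = l x i + l y i := by
        intro i
        have hbv : ∀ j, (fun i => D v i + D w i) j < 3 := fun j => by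
          show D v j + D w j < 3; have := hDle v j; have := hDle w j; omega
        have hbx : ∀ j, (fun i => D x i + D y i) j < 3 := fun j => by
          show D x j + D y j < 3; have := hDle x j; have := hDle y j; omega
        have h3 : D v (i:ℕ) + D w (i:ℕ) = D x (i:ℕ) + D y (i:ℕ) :=
          digits_unique d (fun i => D v i + D w i) (fun i => D x i + D y i)
            hbv hbx hsum (i : ℕ) i.isLt
        have hcast : (D v (i:ℕ) : ℝ) + D w (i:ℕ) = (D x (i:ℕ) : ℝ) + D y (i:ℕ) := by
          exact_mod_cast h3
        rw [hDreal, hDreal, hDreal, hDreal] at hcast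
        exact hcast
      -- the common midpoint lies in both open segments
      refine ⟨fun i => (l v i + l w i) / 2, ⟨1/2, 1/2, by norm_num, by norm_num, by norm_num, ?_⟩,
        ⟨1/2, 1/2, by norm_num, by norm_num, by norm_num, ?_⟩⟩
      · funext i
        simp only [Pi.add_apply, Pi.smul_apply, smul_eq_mul]
        ring
      · funext i
        simp only [Pi.add_apply, Pi.smul_apply, smul_eq_mul]
        have := hpt i
        linarith
  -- conclude
  have hpow : ((2 : ℝ) ^ d) ^ (Real.logb 2 3) = 3 ^ d := by
    rw [← Real.rpow_natCast 2 d, ← Real.rpow_mul (by norm_num), mul_comm,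
      Real.rpow_mul (by norm_num), Real.rpow_logb (by norm_num) (by norm_num) (by norm_num),
      Real.rpow_natCast]
  calc (MAG G : ℝ) ≤ ((3 ^ d : ℕ) : ℝ) := by exact_mod_cast hMAG
    _ = (3 : ℝ) ^ d := by push_cast; ring
    _ = ((2 : ℝ) ^ d) ^ (Real.logb 2 3) := hpow.symm
    _ = (VOL G : ℝ) ^ (Real.logb 2 3) := by rw [hVOL]; push_cast; ring
end

section
/- If v₁,...,vₙ are vectors in {0,1}^d such that vᵢ+vⱼ ≠ vₖ+vₗ for all distinct unordered pairs {i,j} ≠ {k,ℓ} (including pairs with i=j), then taking these as vertex positions yields a hypercube drawing of the complete graph Kₙ; conversely, the vertex set of any hypercube drawing of Kₙ satisfies this condition. -/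
open Finset

private lemma key01 (a b c e x y z w : ℝ)
    (hx : x = 0 ∨ x = 1) (hy : y = 0 ∨ y = 1) (hz : z = 0 ∨ z = 1) (hw : w = 0 ∨ w = 1)
    (ha : 0 < a) (hb : 0 < b) (hab : a + b = 1)
    (hc : 0 < c) (he : 0 < e) (hce : c + e = 1)
    (h : a * x + b * y = c * z + e * w) : x + y = z + w := by
  rcases hx with rfl | rfl <;> rcases hy with rfl | rfl <;>
    rcases hz with rfl | rfl <;> rcases hw with rfl | rfl <;> nlinarith

private lemma dbl01 (x z w : ℝ) (hx : x = 0 ∨ x = 1) (hz : z = 0 ∨ z = 1) (hw : w = 0 ∨ w = 1)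
    (h : x + x = z + w) : z = w := by
  rcases hx with rfl | rfl <;> rcases hz with rfl | rfl <;> rcases hw with rfl | rfl <;> linarith


/-- Vectors `v₁,…,vₙ ∈ {0,1}^d` are the vertex set of a hypercube drawing of the
complete graph `Kₙ` if and only if `vᵢ+vⱼ ≠ vₖ+vₗ` for all distinct unordered pairs
`{i,j} ≠ {k,ℓ}` (pairs with `i = j` allowed). -/
theorem complete_drawing_iff (n d : ℕ) (v : Fin n → Fin d → ℝ)
    (h01 : ∀ i c, v i c = 0 ∨ v i c = 1) :
    IsHypercubeDrawing (⊤ : SimpleGraph (Fin n)) d v ↔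
      ∀ i j k l : Fin n, s(i, j) ≠ s(k, l) → v i + v j ≠ v k + v l := by
  constructor
  · rintro ⟨-, hinj, hcross⟩ i j k l hne heq
    have heqc : ∀ c, v i c + v j c = v k c + v l c := fun c => by
      have := congrFun heq c; simpa using this
    by_cases hij : i = j
    · subst hij
      by_cases hkl : k = l
      · subst hkl
        have : v i = v k := funext fun c => by
          have := heqc c
          rcases h01 i c with h1 | h1 <;> rcases h01 k c with h2 | h2 <;>
            rw [h1, h2] at this ⊢ <;> linarith
        exact hne (by rw [hinj this])
      · exact hkl (hinj (funext fun c =>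
          dbl01 (v i c) (v k c) (v l c) (h01 i c) (h01 k c) (h01 l c) (heqc c)))
    · by_cases hkl : k = l
      · subst hkl
        exact hij (hinj (funext fun c =>
          dbl01 (v k c) (v i c) (v j c) (h01 k c) (h01 i c) (h01 j c) (heqc c).symm))
      · refine hcross i j k l (by simpa using hij) (by simpa using hkl) hne ?_
        refine ⟨(1/2 : ℝ) • v i + (1/2 : ℝ) • v j,
          ⟨1/2, 1/2, by norm_num, by norm_num, by norm_num, rfl⟩,
          ⟨1/2, 1/2, by norm_num, by norm_num, by norm_num, ?_⟩⟩
        funext c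
        have := heqc c
        simp only [Pi.add_apply, Pi.smul_apply, smul_eq_mul]
        linarith
  · intro h
    have hinj : Function.Injective v := by
      intro i j hv
      by_contra hij
      refine h i i j j (by simp [Sym2.eq_iff, hij]) ?_
      rw [hv]
    refine ⟨h01, hinj, ?_⟩
    rintro a b x y hab hxy hne ⟨p, ⟨s, t, hs, ht, hst, hp1⟩, ⟨s', t', hs', ht', hst', hp2⟩⟩
    refine h a b x y hne (funext fun c => ?_)
    have h1 : s * v a c + t * v b c = s' * v x c + t' * v y c := by
      have := congrFun (hp1.trans hp2.symm) c
      simpa using this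
    have := key01 s t s' t' (v a c) (v b c) (v x c) (v y c)
      (h01 a c) (h01 b c) (h01 x c) (h01 y c) hs ht hst hs' ht' hst' h1
    simpa using this
end

section
/- The maximum number of edges in a graph admitting a d-dimensional hypercube drawing is at most 3^d − 2^d. -/
open Finset

/-- A graph admitting a `d`-dimensional hypercube drawing has at most `3^d − 2^d` edges. -/
theorem edge_bound_of_hypercube_drawing {V : Type*} [Fintype V] [DecidableEq V]
    (G : SimpleGraph V) [DecidableRel G.Adj] (d : ℕ) (l : V → Fin d → ℝ)
    (hl : IsHypercubeDrawing G d l) :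
    G.edgeFinset.card ≤ 3 ^ d - 2 ^ d := by
  classical
  obtain ⟨h01, hinj, hcross⟩ := hl
  -- encode the coordinatewise sum of an edge as a natural-number vector
  have gcomm : ∀ v w : V, (fun i => if l v i + l w i = 0 then (0:ℕ)
      else if l v i + l w i = 1 then 1 else 2)
      = (fun i => if l w i + l v i = 0 then (0:ℕ)
      else if l w i + l v i = 1 then 1 else 2) := by
    intro v w; funext i; rw [add_comm]
  let Φ : Sym2 V → (Fin d → ℕ) := Sym2.lift ⟨fun v w i =>
    if l v i + l w i = 0 then 0 else if l v i + l w i = 1 then 1 else 2, gcomm⟩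
  have hΦ : ∀ v w : V, Φ s(v, w) = fun i =>
      if l v i + l w i = 0 then 0 else if l v i + l w i = 1 then 1 else 2 := by
    intro v w; rfl
  have hsum : ∀ v w : V, ∀ i, l v i + l w i = (Φ s(v, w) i : ℝ) := by
    intro v w i
    rw [hΦ]
    rcases h01 v i with h1 | h1 <;> rcases h01 w i with h2 | h2 <;>
      simp [h1, h2] <;> norm_num
  have hmem : ∀ v w : V, ∀ i, Φ s(v, w) i ∈ ({0, 1, 2} : Finset ℕ) := by
    intro v w i
    rw [hΦ]
    dsimp only
    split_ifs <;> simp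
  have hone : ∀ v w : V, G.Adj v w → ∃ i, Φ s(v, w) i = 1 := by
    intro v w hvw
    have hne : l v ≠ l w := fun h => G.ne_of_adj hvw (hinj h)
    obtain ⟨i, hi⟩ := Function.ne_iff.mp hne
    refine ⟨i, ?_⟩
    rw [hΦ]
    dsimp only
    rcases h01 v i with h1 | h1 <;> rcases h01 w i with h2 | h2
    · exact absurd (h1.trans h2.symm) hi
    · rw [h1, h2]; norm_num
    · rw [h1, h2]; norm_num
    · exact absurd (h1.trans h2.symm) hi
  set S : Finset (Fin d → ℕ) :=
    (Fintype.piFinset fun _ : Fin d => ({0, 1, 2} : Finset ℕ)) \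
      (Fintype.piFinset fun _ : Fin d => ({0, 2} : Finset ℕ)) with hS
  have hcard : S.card = 3 ^ d - 2 ^ d := by
    rw [hS, Finset.card_sdiff_of_subset, Fintype.card_piFinset, Fintype.card_piFinset]
    · simp
    · intro f hf
      simp only [Fintype.mem_piFinset] at hf ⊢
      intro i
      have := hf i
      simp only [Finset.mem_insert, Finset.mem_singleton] at this ⊢
      tauto
  have hmaps : ∀ e ∈ G.edgeFinset, Φ e ∈ S := by
    intro e he
    induction e with
    | _ v w =>
      have hvw : G.Adj v w := SimpleGraph.mem_edgeFinset.mp he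
      rw [hS, Finset.mem_sdiff]
      constructor
      · rw [Fintype.mem_piFinset]; exact hmem v w
      · rw [Fintype.mem_piFinset]
        obtain ⟨i, hi⟩ := hone v w hvw
        push_neg
        exact ⟨i, by rw [hi]; simp⟩
  have hinjOn : Set.InjOn Φ G.edgeFinset := by
    intro e1 he1 e2 he2 heq
    by_contra hne
    induction e1 with
    | _ v w =>
      induction e2 with
      | _ x y =>
        have hvw : G.Adj v w := SimpleGraph.mem_edgeFinset.mp he1
        have hxy : G.Adj x y := SimpleGraph.mem_edgeFinset.mp he2
        have hsums : ∀ i, l v i + l w i = l x i + l y i := by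
          intro i
          rw [hsum v w i, hsum x y i, heq]
        apply hcross v w x y hvw hxy hne
        refine ⟨fun i => (l v i + l w i) / 2, ?_, ?_⟩
        · exact ⟨1/2, 1/2, by norm_num, by norm_num, by norm_num,
            by funext i; simp [Pi.smul_apply, smul_eq_mul]; ring⟩
        · exact ⟨1/2, 1/2, by norm_num, by norm_num, by norm_num,
            by funext i; simp only [Pi.add_apply, Pi.smul_apply, smul_eq_mul]
               linarith [hsums i]⟩
    all_goals trivial
  calc G.edgeFinset.card ≤ S.card := Finset.card_le_card_of_injOn Φ hmaps hinjOn
    _ = 3 ^ d - 2 ^ d := hcard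
end

section
/- Every n-vertex m-edge graph G with degeneracy d satisfies MAG(G) ≤ n + d·m. -/
/-!
Remove a vertex `v` of degree at most `d`, label the rest by induction, and give `v` an unused
label `a` for which no new edge sum `a + f u` (`u` a neighbour of `v`) equals an old edge sum;
two new edges have distinct sums because the labels are injective. At most
`#(old vertices) + d · #(old edges)` values are excluded, so `n + d · m` labels suffice.
-/

open Finset Function

section

variable {V M : Type*}

def edgeSum [AddCommMonoid M] (f : V → M) : Sym2 V → M :=
  Sym2.lift ⟨fun x y => f x + f y, fun x y => add_comm (f x) (f y)⟩

@[simp]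
lemma edgeSum_mk [AddCommMonoid M] (f : V → M) (x y : V) : edgeSum f s(x, y) = f x + f y := rfl

lemma isAntimagic_of_injOn_edgeSum {G : SimpleGraph V} {f : V → ℕ}
    (h : Set.InjOn (edgeSum f) G.edgeSet) : IsAntimagic G f :=
  fun _ _ _ _ hvw hxy hne hsum => hne (h hvw hxy hsum)

section inducedEdges

variable (G : SimpleGraph V) [DecidableRel G.Adj]

def inducedEdges (s : Finset V) : Finset (Sym2 V) := {e ∈ s.sym2 | e ∈ G.edgeSet}

variable {G}

@[simp]
lemma mk_mem_inducedEdges {s : Finset V} {x y : V} :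
    s(x, y) ∈ inducedEdges G s ↔ (x ∈ s ∧ y ∈ s) ∧ G.Adj x y := by
  simp [inducedEdges]

lemma inducedEdges_mono {s t : Finset V} (h : s ⊆ t) : inducedEdges G s ⊆ inducedEdges G t :=
  filter_subset_filter _ (sym2_mono h)

lemma inducedEdges_univ [Fintype V] [DecidableEq V] :
    inducedEdges G univ = G.edgeFinset := by
  ext e
  simp [inducedEdges]

lemma inducedEdges_insert_subset [DecidableEq V] (s : Finset V) (v : V) :
    inducedEdges G (insert v s) ⊆
      inducedEdges G s ∪ {u ∈ s | G.Adj v u}.image (s(v, ·)) := by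
  intro e he
  induction e using Sym2.ind with | h x y => ?_
  simp only [mk_mem_inducedEdges, mem_insert] at he
  obtain ⟨⟨rfl | hx, rfl | hy⟩, hxy⟩ := he
  · exact absurd hxy (G.loopless.irrefl _)
  · exact mem_union_right _ (mem_image.2 ⟨y, mem_filter.2 ⟨hy, hxy⟩, rfl⟩)
  · exact mem_union_right _ (mem_image.2 ⟨x, mem_filter.2 ⟨hx, hxy.symm⟩, Sym2.eq_swap⟩)
  · exact mem_union_left _ (mk_mem_inducedEdges.2 ⟨⟨hx, hy⟩, hxy⟩)

lemma mk_notMem_inducedEdges {s : Finset V} {v : V} (hv : v ∉ s) (u : V) :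
    s(v, u) ∉ inducedEdges G s := by
  simp [hv]

end inducedEdges

section extension

variable [DecidableEq V] {G : SimpleGraph V} [DecidableRel G.Adj] {s : Finset V} {v : V}

lemma eqOn_update_of_notMem {N : Type*} {t : Set V} (f : V → N) (a : N) (hv : v ∉ t) :
    Set.EqOn (update f v a) f t :=
  fun _ hu => update_of_ne (ne_of_mem_of_not_mem hu hv) ..

lemma injOn_update_insert {N : Type*} {f : V → N} {a : N} (hv : v ∉ s)
    (hf : Set.InjOn f s) (ha : a ∉ f '' s) : Set.InjOn (update f v a) (insert v s) := by
  have hfs := eqOn_update_of_notMem f a (t := s) hv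
  rw [Set.injOn_insert hv, hfs.image_eq, update_self]
  exact ⟨hf.congr hfs.symm, ha⟩

lemma injOn_edgeSum_update_insert [AddCancelCommMonoid M] {f : V → M} {a : M} (hv : v ∉ s)
    (hf : Set.InjOn f s) (hfe : Set.InjOn (edgeSum f) (inducedEdges G s))
    (ha : ∀ u ∈ s, G.Adj v u → ∀ e ∈ inducedEdges G s, a + f u ≠ edgeSum f e) :
    Set.InjOn (edgeSum (update f v a)) (inducedEdges G (insert v s)) := by
  have hold : Set.EqOn (edgeSum (update f v a)) (edgeSum f) (inducedEdges G s) := by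
    intro e he
    induction e using Sym2.ind with | h x y => ?_
    obtain ⟨⟨hx, hy⟩, -⟩ := mk_mem_inducedEdges.1 he
    simp only [edgeSum_mk, eqOn_update_of_notMem f a hv hx, eqOn_update_of_notMem f a hv hy]
  have hnew : ∀ u ∈ s, edgeSum (update f v a) s(v, u) = a + f u := fun u hu => by
    rw [edgeSum_mk, update_self, eqOn_update_of_notMem f a hv hu]
  refine Set.InjOn.mono (coe_subset.2 (inducedEdges_insert_subset s v)) ?_
  have hdisj : Disjoint (inducedEdges G s : Set (Sym2 V))
      ({u ∈ s | G.Adj v u}.image (s(v, ·))) := by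
    rw [disjoint_coe, disjoint_left]
    intro e he he'
    obtain ⟨u, -, rfl⟩ := mem_image.1 he'
    exact mk_notMem_inducedEdges hv u he
  rw [coe_union, Set.injOn_union hdisj, coe_image]
  refine ⟨hfe.congr hold.symm, ?_, ?_⟩
  · rintro _ ⟨u₁, hu₁, rfl⟩ _ ⟨u₂, hu₂, rfl⟩ h
    rw [mem_coe, mem_filter] at hu₁ hu₂
    rw [hnew u₁ hu₁.1, hnew u₂ hu₂.1] at h
    rw [hf hu₁.1 hu₂.1 (add_left_cancel h)]
  · rintro e he _ ⟨u, hu, rfl⟩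
    rw [mem_coe, mem_filter] at hu
    rw [hold he, hnew u hu.1]
    exact (ha u hu.1 hu.2 e he).symm

end extension

lemma exists_mem_Icc_avoiding (f : V → ℕ) (s N : Finset V) (E : Finset (Sym2 V)) {K : ℕ}
    (hK : #s + #N * #E < K) :
    ∃ a ∈ Icc 1 K, a ∉ f '' s ∧ ∀ u ∈ N, ∀ e ∈ E, a + f u ≠ edgeSum f e := by
  let F := s.image f ∪ image₂ (fun u e => edgeSum f e - f u) N E
  have hF : #F < #(Icc 1 K) :=
    calc #F ≤ #s + #N * #E :=
          (card_union_le _ _).trans (add_le_add card_image_le (card_image₂_le ..))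
      _ < K := hK
      _ = #(Icc 1 K) := by simp
  obtain ⟨a, haK, haF⟩ := exists_mem_notMem_of_card_lt_card hF
  refine ⟨a, haK, fun hfa => haF (mem_union_left _ ?_),
    fun u hu e he hsum => haF (mem_union_right _ ?_)⟩
  · simpa using hfa
  · exact mem_image₂.2 ⟨u, hu, e, he, by omega⟩

theorem exists_antimagic_labelling_on [DecidableEq V] (G : SimpleGraph V) [DecidableRel G.Adj]
    {d : ℕ} (hdeg : ∀ s : Finset V, s.Nonempty → ∃ v ∈ s, #{w ∈ s | G.Adj v w} ≤ d)
    (s : Finset V) :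
    ∃ f : V → ℕ, Set.InjOn f s ∧ Set.InjOn (edgeSum f) (inducedEdges G s) ∧
      Set.MapsTo f s (Icc 1 (#s + d * #(inducedEdges G s))) := by
  induction s using Finset.strongInduction with | H s ih => ?_
  obtain rfl | hs := s.eq_empty_or_nonempty
  · exact ⟨fun _ => 1, by simp, by simp [inducedEdges], by simp [Set.MapsTo]⟩
  obtain ⟨v, hv, hvd⟩ := hdeg s hs
  obtain ⟨t, hvt, rfl⟩ : ∃ t, v ∉ t ∧ insert v t = s :=
    ⟨s.erase v, notMem_erase v s, insert_erase hv⟩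
  obtain ⟨f, hf, hfe, hfK⟩ := ih t (ssubset_insert hvt)
  have hE := card_le_card (inducedEdges_mono (G := G) (subset_insert v t))
  have hN : #{u ∈ t | G.Adj v u} ≤ d :=
    (card_le_card (filter_subset_filter _ (subset_insert v t))).trans hvd
  set K := #(insert v t) + d * #(inducedEdges G (insert v t))
  have hcard : #(insert v t) = #t + 1 := card_insert_of_notMem hvt
  have hKt : #t + d * #(inducedEdges G t) ≤ K := by
    have := Nat.mul_le_mul_left d hE
    omega
  have hK : #t + #{u ∈ t | G.Adj v u} * #(inducedEdges G t) < K := by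
    have := Nat.mul_le_mul hN hE
    omega
  obtain ⟨a, haK, haf, hae⟩ := exists_mem_Icc_avoiding f t _ _ hK
  rw [coe_insert]
  refine ⟨update f v a, injOn_update_insert hvt hf haf,
    injOn_edgeSum_update_insert hvt hf hfe fun u hu hvu => hae u (mem_filter.2 ⟨hu, hvu⟩), ?_⟩
  have := ((hfK.mono_right (coe_subset.2 (Icc_subset_Icc_right hKt))).congr
    (eqOn_update_of_notMem f a hvt).symm).insert v
  rwa [update_self, Set.insert_eq_of_mem (mem_coe.2 haK)] at this

end

/-- Every `n`-vertex `m`-edge graph of degeneracy at most `d` (every nonempty induced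
subgraph has a vertex of degree at most `d`) satisfies `MAG(G) ≤ n + d·m`. -/
theorem mag_le_of_degeneracy {V : Type*} [Fintype V] [DecidableEq V] (G : SimpleGraph V)
    [DecidableRel G.Adj] (d : ℕ)
    (hdeg : ∀ s : Finset V, s.Nonempty → ∃ v ∈ s, (s.filter (fun w => G.Adj v w)).card ≤ d) :
    MAG G ≤ Fintype.card V + d * G.edgeFinset.card := by
  obtain ⟨f, hf, hfe, hfK⟩ := exists_antimagic_labelling_on G hdeg univ
  rw [coe_univ, Set.injOn_univ] at hf
  rw [inducedEdges_univ, SimpleGraph.coe_edgeFinset] at hfe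
  rw [inducedEdges_univ] at hfK
  exact Nat.sInf_le ⟨f, hf, fun v => hfK (mem_univ v), isAntimagic_of_injOn_edgeSum hfe⟩
end

section
/- If a graph G admits a 1-queue layout, then MAG(G) = |V(G)|. That is, the vertex ordering σ of a 1-queue layout is itself an antimagic injection into {1,...,|V(G)|}. -/
private lemma mag_arith (a b c d : ℕ) (hsum : a + b = c + d)
    (hab : a ≠ b) (hcd : c ≠ d) (hac : a ≠ c) (had : a ≠ d)
    (h1 : ¬ (a < c ∧ c < d ∧ d < b)) (h2 : ¬ (a < d ∧ d < c ∧ c < b))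
    (h3 : ¬ (b < c ∧ c < d ∧ d < a)) (h4 : ¬ (b < d ∧ d < c ∧ c < a))
    (h5 : ¬ (c < a ∧ a < b ∧ b < d)) (h6 : ¬ (c < b ∧ b < a ∧ a < d))
    (h7 : ¬ (d < a ∧ a < b ∧ b < c)) (h8 : ¬ (d < b ∧ b < a ∧ a < c)) : False := by
  have hbc : b ≠ c := by clear h1 h2 h3 h4 h5 h6 h7 h8; omega
  have hbd : b ≠ d := by clear h1 h2 h3 h4 h5 h6 h7 h8; omega
  rcases lt_or_gt_of_ne hab with h' | h'
  · rcases lt_or_gt_of_ne hcd with h'' | h''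
    · rcases lt_or_gt_of_ne hac with h | h
      · exact h1 ⟨h, h'', by clear h1 h2 h3 h4 h5 h6 h7 h8; omega⟩
      · exact h5 ⟨h, h', by clear h1 h2 h3 h4 h5 h6 h7 h8; omega⟩
    · rcases lt_or_gt_of_ne had with h | h
      · exact h2 ⟨h, h'', by clear h1 h2 h3 h4 h5 h6 h7 h8; omega⟩
      · exact h7 ⟨h, h', by clear h1 h2 h3 h4 h5 h6 h7 h8; omega⟩
  · rcases lt_or_gt_of_ne hcd with h'' | h''
    · rcases lt_or_gt_of_ne hbc with h | h
      · exact h3 ⟨h, h'', by clear h1 h2 h3 h4 h5 h6 h7 h8; omega⟩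
      · exact h6 ⟨h, h', by clear h1 h2 h3 h4 h5 h6 h7 h8; omega⟩
    · rcases lt_or_gt_of_ne hbd with h | h
      · exact h4 ⟨h, h'', by clear h1 h2 h3 h4 h5 h6 h7 h8; omega⟩
      · exact h8 ⟨h, h', by clear h1 h2 h3 h4 h5 h6 h7 h8; omega⟩

/-- If a graph `G` has a `1`-queue layout (a vertex ordering `σ` with no two nested
edges), then `σ` is an antimagic injection and `MAG(G) = |V(G)|`. -/
theorem mag_of_one_queue {V : Type*} [Fintype V] (G : SimpleGraph V)
    (σ : V ≃ Fin (Fintype.card V))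
    (hq : ∀ v w x y : V, G.Adj v w → G.Adj x y →
      ¬ ((σ v : ℕ) < σ x ∧ (σ x : ℕ) < σ y ∧ (σ y : ℕ) < σ w)) :
    IsAntimagic G (fun v => (σ v : ℕ) + 1) ∧ MAG G = Fintype.card V := by
  have hinj : ∀ p q : V, ((σ p : ℕ) = (σ q : ℕ)) → p = q := by
    intro p q h
    exact σ.injective (Fin.ext h)
  have hAM : IsAntimagic G (fun v => (σ v : ℕ) + 1) := by
    intro v w x y hvw hxy hne hsum
    simp only at hsum
    have hsum' : (σ v : ℕ) + (σ w : ℕ) = (σ x : ℕ) + (σ y : ℕ) := by omega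
    have hab : (σ v : ℕ) ≠ (σ w : ℕ) := fun h => (G.ne_of_adj hvw) (hinj _ _ h)
    have hcd : (σ x : ℕ) ≠ (σ y : ℕ) := fun h => (G.ne_of_adj hxy) (hinj _ _ h)
    have hac : (σ v : ℕ) ≠ (σ x : ℕ) := by
      intro h
      have hvx : v = x := hinj _ _ h
      have hbd : (σ w : ℕ) = (σ y : ℕ) := by omega
      have hwy : w = y := hinj _ _ hbd
      exact hne (by rw [hvx, hwy])
    have had : (σ v : ℕ) ≠ (σ y : ℕ) := by
      intro h
      have hvy : v = y := hinj _ _ h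
      have hbc : (σ w : ℕ) = (σ x : ℕ) := by omega
      have hwx : w = x := hinj _ _ hbc
      exact hne (by rw [hvy, hwx, Sym2.eq_swap])
    exact mag_arith _ _ _ _ hsum' hab hcd hac had
      (hq v w x y hvw hxy) (hq v w y x hvw hxy.symm)
      (hq w v x y hvw.symm hxy) (hq w v y x hvw.symm hxy.symm)
      (hq x y v w hxy hvw) (hq x y w v hxy hvw.symm)
      (hq y x v w hxy.symm hvw) (hq y x w v hxy.symm hvw.symm)
  refine ⟨hAM, ?_⟩
  have hmem : Fintype.card V ∈
      {k | ∃ f : V → ℕ, Function.Injective f ∧ (∀ v, f v ∈ Finset.Icc 1 k) ∧ IsAntimagic G f} := by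
    refine ⟨fun v => (σ v : ℕ) + 1, ?_, ?_, hAM⟩
    · intro p q h
      simp only at h
      exact hinj _ _ (by omega)
    · intro v
      simp only [Finset.mem_Icc]
      have := (σ v).isLt
      omega
  have hlb : ∀ k ∈
      {k | ∃ f : V → ℕ, Function.Injective f ∧ (∀ v, f v ∈ Finset.Icc 1 k) ∧ IsAntimagic G f},
      Fintype.card V ≤ k := by
    rintro k ⟨f, hf1, hf2, -⟩
    have h := Finset.card_le_card_of_injOn (s := Finset.univ) f (fun a _ => hf2 a) hf1.injOn
    simpa using h
  exact le_antisymm (Nat.sInf_le hmem) (le_csInf ⟨_, hmem⟩ hlb)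
end

section
/- For every prime p > 2 and every n, the map λ(vᵢ) := 1 + 2pi + (i² mod p) for 0 ≤ i ≤ n−1 is an antimagic injection of the p-th power of the path Pₙᵖ into {1,...,p(2n−1)}. Hence MAG(Pₙᵖ) ≤ p(2n−1). -/
/-- `pathPower n k` is the `k`-th power `Pₙᵏ` of the path: vertices `0,…,n−1`,
with `i ∼ j` whenever `1 ≤ |i−j| ≤ k`. -/
def pathPower (n k : ℕ) : SimpleGraph (Fin n) where
  Adj i j := i ≠ j ∧ (i : ℕ) ≤ (j : ℕ) + k ∧ (j : ℕ) ≤ (i : ℕ) + k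
  symm := ⟨fun i j ⟨h1, h2, h3⟩ => ⟨h1.symm, h3, h2⟩⟩
  loopless := ⟨fun i h => h.1 rfl⟩

/-!
The label `1 + 2pi + (i² mod p)` stores `i` in its quotient by `2p` and `i² mod p` in the
remainder; since a sum of two remainders is still below `2p`, equal label sums on edges `vw`,
`xy` force `v + w = x + y` and `v² + w² ≡ x² + y² (mod p)`. Then `(v - w)² = 2(v² + w²) - (v + w)²`
gives `(v - w)² ≡ (x - y)² (mod p)`, so `p` divides `(v - w) - (x - y)` or `(v - w) + (x - y)`.
Both are even and lie in `[-2p, 2p]` because `|v - w|, |x - y| ≤ p`, so as `p` is odd,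
`v - w = ±(x - y)`, and together with `v + w = x + y` the edges coincide.
-/

theorem Int.eq_or_eq_neg_of_sq_modEq {p : ℕ} (hp : p.Prime) (hp2 : p ≠ 2) {u w : ℤ}
    (hu : |u| ≤ p) (hw : |w| ≤ p) (hpar : u ≡ w [ZMOD 2]) (h : u ^ 2 ≡ w ^ 2 [ZMOD p]) :
    u = w ∨ u = -w := by
  have hodd : p % 2 = 1 := hp.eq_two_or_odd.resolve_left hp2
  have hpos : (0 : ℤ) < p := by exact_mod_cast hp.pos
  have hdvd : (p : ℤ) ∣ (u - w) * (u + w) := by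
    rw [mul_comm, ← sq_sub_sq]
    exact h.symm.dvd
  obtain ⟨_, _⟩ := abs_le.mp hu
  obtain ⟨_, _⟩ := abs_le.mp hw
  have := hpar.dvd
  rcases (Nat.prime_iff_prime_int.mp hp).dvd_mul.mp hdvd with ⟨k, hk⟩ | ⟨k, hk⟩ <;>
  · have : -2 ≤ k := by nlinarith
    have : k ≤ 2 := by nlinarith
    interval_cases k <;> omega

theorem Int.eq_and_eq_or_eq_and_eq_of_add_eq_of_sq_add_sq_modEq {p : ℕ} (hp : p.Prime)
    (hp2 : p ≠ 2) {a b c d : ℤ} (hsum : a + b = c + d)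
    (hsq : a ^ 2 + b ^ 2 ≡ c ^ 2 + d ^ 2 [ZMOD p]) (hab : |a - b| ≤ p) (hcd : |c - d| ≤ p) :
    a = c ∧ b = d ∨ a = d ∧ b = c := by
  have hpar : a - b ≡ c - d [ZMOD 2] :=
    Int.modEq_iff_dvd.mpr ⟨b - d, by linear_combination -hsum⟩
  have hsq' : (a - b) ^ 2 ≡ (c - d) ^ 2 [ZMOD p] := by
    have key (x y : ℤ) : (x - y) ^ 2 = 2 * (x ^ 2 + y ^ 2) - (x + y) ^ 2 := by ring
    rw [key, key, hsum]
    exact (hsq.mul_left 2).sub_right _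
  rcases Int.eq_or_eq_neg_of_sq_modEq hp hp2 hab hcd hpar hsq' with h | h
  · exact Or.inl ⟨by linarith, by linarith⟩
  · exact Or.inr ⟨by linarith, by linarith⟩

theorem Nat.eq_and_eq_of_mul_add_eq_mul_add {b q q' r r' : ℕ} (hr : r < b) (hr' : r' < b)
    (h : b * q + r = b * q' + r') : q = q' ∧ r = r' := by
  have hb : 0 < b := by omega
  obtain ⟨hq, hr⟩ := (Nat.div_mod_unique hb).mpr ⟨add_comm r (b * q), hr⟩
  obtain ⟨hq', hr'⟩ := (Nat.div_mod_unique hb).mpr ⟨add_comm r' (b * q'), hr'⟩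
  rw [h] at hq hr
  omega

theorem MAG_le {V : Type*} {G : SimpleGraph V} {f : V → ℕ} {k : ℕ} (hf : Function.Injective f)
    (hk : ∀ v, f v ∈ Finset.Icc 1 k) (ha : IsAntimagic G f) : MAG G ≤ k :=
  Nat.sInf_le ⟨f, hf, hk, ha⟩

def quadraticLabel (p i : ℕ) : ℕ := 1 + 2 * p * i + i ^ 2 % p

section quadraticLabel

variable {p : ℕ}

theorem quadraticLabel_injective (hp : 0 < p) : Function.Injective (quadraticLabel p) := by
  intro i j h
  have hi := Nat.mod_lt (i ^ 2) hp
  have hj := Nat.mod_lt (j ^ 2) hp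
  unfold quadraticLabel at h
  exact (Nat.eq_and_eq_of_mul_add_eq_mul_add (b := 2 * p) (q := i) (q' := j)
    (r := i ^ 2 % p) (r' := j ^ 2 % p) (by omega) (by omega) (by omega)).1

theorem quadraticLabel_mem_Icc (hp : 0 < p) {i n : ℕ} (hi : i < n) :
    quadraticLabel p i ∈ Finset.Icc 1 (p * (2 * n - 1)) := by
  have hr := Nat.mod_lt (i ^ 2) hp
  have hle : 2 * p * i ≤ 2 * p * (n - 1) := Nat.mul_le_mul_left _ (by omega)
  have hbound : p * (2 * n - 1) = 2 * p * (n - 1) + p := by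
    obtain ⟨m, rfl⟩ : ∃ m, n = m + 1 := ⟨n - 1, by omega⟩
    rw [show 2 * (m + 1) - 1 = 2 * m + 1 by omega, Nat.add_sub_cancel]
    ring
  rw [Finset.mem_Icc, hbound]
  unfold quadraticLabel
  omega

theorem quadraticLabel_add_eq (hp : 0 < p) {a b c d : ℕ}
    (h : quadraticLabel p a + quadraticLabel p b = quadraticLabel p c + quadraticLabel p d) :
    a + b = c + d ∧ a ^ 2 + b ^ 2 ≡ c ^ 2 + d ^ 2 [MOD p] := by
  have := Nat.mod_lt (a ^ 2) hp
  have := Nat.mod_lt (b ^ 2) hp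
  have := Nat.mod_lt (c ^ 2) hp
  have := Nat.mod_lt (d ^ 2) hp
  unfold quadraticLabel at h
  obtain ⟨hsum, hrem⟩ := Nat.eq_and_eq_of_mul_add_eq_mul_add (b := 2 * p)
    (q := a + b) (q' := c + d) (r := a ^ 2 % p + b ^ 2 % p) (r' := c ^ 2 % p + d ^ 2 % p)
    (by omega) (by omega) (by rw [mul_add, mul_add]; omega)
  refine ⟨hsum, ?_⟩
  rw [Nat.ModEq, Nat.add_mod, hrem, ← Nat.add_mod]

theorem isAntimagic_pathPower_quadraticLabel (hp : p.Prime) (hp2 : p ≠ 2) (n : ℕ) :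
    IsAntimagic (pathPower n p) (fun i => quadraticLabel p i) := by
  rintro v w x y ⟨-, hvw, hwv⟩ ⟨-, hxy, hyx⟩ hne heq
  apply hne
  obtain ⟨hsum, hsq⟩ := quadraticLabel_add_eq hp.pos heq
  have hsq' := Int.natCast_modEq_iff.mpr hsq
  push_cast at hsq'
  rcases Int.eq_and_eq_or_eq_and_eq_of_add_eq_of_sq_add_sq_modEq hp hp2
    (by exact_mod_cast hsum) hsq' (abs_le.mpr ⟨by omega, by omega⟩)
    (abs_le.mpr ⟨by omega, by omega⟩) with h | h
  · exact Sym2.eq_iff.mpr (Or.inl ⟨Fin.ext (by omega), Fin.ext (by omega)⟩)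
  · exact Sym2.eq_iff.mpr (Or.inr ⟨Fin.ext (by omega), Fin.ext (by omega)⟩)

end quadraticLabel

theorem mag_path_power_general (p n : ℕ) (hp : p.Prime) (hp2 : 2 < p) :
    Function.Injective (fun i : Fin n => 1 + 2 * p * (i : ℕ) + (i : ℕ) ^ 2 % p) ∧
      (∀ i : Fin n, 1 + 2 * p * (i : ℕ) + (i : ℕ) ^ 2 % p ∈ Finset.Icc 1 (p * (2 * n - 1))) ∧
      IsAntimagic (pathPower n p) (fun i => 1 + 2 * p * (i : ℕ) + (i : ℕ) ^ 2 % p) ∧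
      MAG (pathPower n p) ≤ p * (2 * n - 1) := by
  have hinj : Function.Injective (fun i : Fin n => quadraticLabel p i) :=
    (quadraticLabel_injective hp.pos).comp Fin.val_injective
  have hmem (i : Fin n) : quadraticLabel p i ∈ Finset.Icc 1 (p * (2 * n - 1)) :=
    quadraticLabel_mem_Icc hp.pos i.isLt
  have hanti := isAntimagic_pathPower_quadraticLabel hp hp2.ne' n
  exact ⟨hinj, hmem, hanti, MAG_le hinj hmem hanti⟩

/-- For every odd prime `p`, the map `vᵢ ↦ 1 + 2pi + (i² mod p)` is an antimagic
injection of `Pₙᵖ` into `{1,…,p(2n−1)}`; hence `MAG(Pₙᵖ) ≤ p(2n−1)`. -/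
theorem mag_path_power (p n : ℕ) (hp : p.Prime) (hp2 : 2 < p) (hn : 1 ≤ n) :
    Function.Injective (fun i : Fin n => 1 + 2 * p * (i : ℕ) + (i : ℕ) ^ 2 % p) ∧
      (∀ i : Fin n, 1 + 2 * p * (i : ℕ) + (i : ℕ) ^ 2 % p ∈ Finset.Icc 1 (p * (2 * n - 1))) ∧
      IsAntimagic (pathPower n p) (fun i => 1 + 2 * p * (i : ℕ) + (i : ℕ) ^ 2 % p) ∧
      MAG (pathPower n p) ≤ p * (2 * n - 1) :=
  mag_path_power_general p n hp hp2
end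

section
/- Let G be a graph and f_V: V(G) → [t]×[r] an injection. Define f_E on edges by f_E(vw) := ({a,b}, i+j) where f_V(v)=(a,i), f_V(w)=(b,j). If f_E is injective on E(G), and S = {s₁,...,s_t} ⊆ {1,...,N} is a Sidon set, then λ(v) := 2r(s_a − 1) + i (for f_V(v)=(a,i)) is an antimagic injection of G into {1,...,2rN}. In particular MAG(G) ≤ 2rN. -/
lemma key_div_mod (m p q p' q' : ℕ) (hq : q < m) (hq' : q' < m)
    (h : m * p + q = m * p' + q') : p = p' ∧ q = q' := by
  have hm : 0 < m := lt_of_le_of_lt (Nat.zero_le _) hq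
  have h1 : (m * p + q) % m = q := by
    rw [Nat.add_comm, Nat.add_mul_mod_self_left, Nat.mod_eq_of_lt hq]
  have h2 : (m * p' + q') % m = q' := by
    rw [Nat.add_comm, Nat.add_mul_mod_self_left, Nat.mod_eq_of_lt hq']
  have hqq : q = q' := by rw [← h1, ← h2, h]
  subst hqq
  have : m * p = m * p' := by omega
  exact ⟨Nat.eq_of_mul_eq_mul_left hm this, rfl⟩

/-- Technical lemma: given an injection `f_V : V(G) → [t]×[r]` whose induced edge map
`vw ↦ ({a,b}, i+j)` is also injective, and a Sidon set `s₁,…,s_t ⊆ {1,…,N}`, the map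
`λ(v) := 2r(s_a − 1) + i` is an antimagic injection of `G` into `{1,…,2rN}`;
hence `MAG(G) ≤ 2rN`. -/
theorem technical_sidon_lemma {V : Type*} [Fintype V] (G : SimpleGraph V) (t r N : ℕ)
    (fV : V → Fin t × Fin r) (hfV : Function.Injective fV)
    (hfE : ∀ v w x y : V, G.Adj v w → G.Adj x y → s(v, w) ≠ s(x, y) →
      ¬ (s((fV v).1, (fV w).1) = s((fV x).1, (fV y).1) ∧
         ((fV v).2 : ℕ) + ((fV w).2 : ℕ) = ((fV x).2 : ℕ) + ((fV y).2 : ℕ)))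
    (s : Fin t → ℕ) (hsInj : Function.Injective s) (hsRange : ∀ a, s a ∈ Finset.Icc 1 N)
    (hSidon : ∀ a b c d : Fin t, s a + s b = s c + s d → s(a, b) = s(c, d)) :
    Function.Injective (fun v => 2 * r * (s (fV v).1 - 1) + ((fV v).2 : ℕ) + 1) ∧
      (∀ v, 2 * r * (s (fV v).1 - 1) + ((fV v).2 : ℕ) + 1 ∈ Finset.Icc 1 (2 * r * N)) ∧
      IsAntimagic G (fun v => 2 * r * (s (fV v).1 - 1) + ((fV v).2 : ℕ) + 1) ∧
      MAG G ≤ 2 * r * N := by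
  have hs1 : ∀ a, 1 ≤ s a ∧ s a ≤ N := fun a => Finset.mem_Icc.mp (hsRange a)
  -- injectivity
  have hinj : Function.Injective
      (fun v => 2 * r * (s (fV v).1 - 1) + ((fV v).2 : ℕ) + 1) := by
    intro v w h
    simp only at h
    have hrv : ((fV v).2 : ℕ) < r := (fV v).2.isLt
    have hrw : ((fV w).2 : ℕ) < r := (fV w).2.isLt
    have hr : 0 < r := lt_of_le_of_lt (Nat.zero_le _) hrv
    have h' : 2 * r * (s (fV v).1 - 1) + ((fV v).2 : ℕ)
        = 2 * r * (s (fV w).1 - 1) + ((fV w).2 : ℕ) := by omega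
    obtain ⟨h1, h2⟩ := key_div_mod (2 * r) _ _ _ _ (by omega) (by omega) h'
    have hsa : s (fV v).1 = s (fV w).1 := by
      have := (hs1 (fV v).1).1; have := (hs1 (fV w).1).1; omega
    have ha : (fV v).1 = (fV w).1 := hsInj hsa
    have hb : (fV v).2 = (fV w).2 := Fin.ext h2
    exact hfV (Prod.ext ha hb)
  -- range
  have hrange : ∀ v, 2 * r * (s (fV v).1 - 1) + ((fV v).2 : ℕ) + 1
      ∈ Finset.Icc 1 (2 * r * N) := by
    intro v
    have hrv : ((fV v).2 : ℕ) < r := (fV v).2.isLt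
    have hr : 0 < r := lt_of_le_of_lt (Nat.zero_le _) hrv
    obtain ⟨h1, h2⟩ := hs1 (fV v).1
    rw [Finset.mem_Icc]
    constructor
    · omega
    · have : 2 * r * (s (fV v).1 - 1) ≤ 2 * r * (N - 1) :=
        Nat.mul_le_mul_left _ (by omega)
      have : 2 * r * (N - 1) + r ≤ 2 * r * N := by
        have : 2 * r * (N - 1) + 2 * r = 2 * r * N := by
          rw [← Nat.mul_succ]; congr 1; omega
        omega
      omega
  -- antimagic
  have hanti : IsAntimagic G
      (fun v => 2 * r * (s (fV v).1 - 1) + ((fV v).2 : ℕ) + 1) := by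
    intro v w x y hvw hxy hne heq
    simp only at heq
    have hrv : ((fV v).2 : ℕ) < r := (fV v).2.isLt
    have hrw : ((fV w).2 : ℕ) < r := (fV w).2.isLt
    have hrx : ((fV x).2 : ℕ) < r := (fV x).2.isLt
    have hry : ((fV y).2 : ℕ) < r := (fV y).2.isLt
    have hr : 0 < r := lt_of_le_of_lt (Nat.zero_le _) hrv
    have h' : 2 * r * ((s (fV v).1 - 1) + (s (fV w).1 - 1))
          + (((fV v).2 : ℕ) + ((fV w).2 : ℕ) + 1)
        = 2 * r * ((s (fV x).1 - 1) + (s (fV y).1 - 1))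
          + (((fV x).2 : ℕ) + ((fV y).2 : ℕ) + 1) := by
      rw [Nat.mul_add, Nat.mul_add]; omega
    obtain ⟨h1, h2⟩ := key_div_mod (2 * r) _ _ _ _ (by omega) (by omega) h'
    have hsum : s (fV v).1 + s (fV w).1 = s (fV x).1 + s (fV y).1 := by
      have := (hs1 (fV v).1).1; have := (hs1 (fV w).1).1
      have := (hs1 (fV x).1).1; have := (hs1 (fV y).1).1
      omega
    exact hfE v w x y hvw hxy hne ⟨hSidon _ _ _ _ hsum, by omega⟩
  refine ⟨hinj, hrange, hanti, ?_⟩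
  exact Nat.sInf_le ⟨_, hinj, hrange, hanti⟩
end

section
/- If λ: V(G) → {0,1}^d is an injection such that the open segments of two distinct edges vw and xy intersect, then the intersection point is the common midpoint of both segments: (λ(v)+λ(w))/2 = (λ(x)+λ(y))/2. -/
/-- Coordinate-wise key lemma: if a point lies on two segments with `0/1` endpoint
coordinates, with matching coefficients `b = e` and `a ≠ b`, then the endpoints agree. -/
lemma aux_coord {a b c e p q r s zi : ℝ} (hab : a + b = 1) (hce : c + e = 1)
    (ha : 0 < a) (hb : 0 < b) (hc : 0 < c) (he : 0 < e)
    (hne : a ≠ b) (hbe : b = e)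
    (h1 : zi = a * p + b * q) (h2 : zi = c * r + e * s)
    (hp : p = 0 ∨ p = 1) (hq : q = 0 ∨ q = 1) (hr : r = 0 ∨ r = 1) (hs : s = 0 ∨ s = 1) :
    p = r ∧ q = s := by
  rcases hne.lt_or_gt with h | h <;>
  rcases hp with hp | hp <;> rcases hq with hq | hq <;>
  rcases hr with hr | hr <;> rcases hs with hs | hs <;>
  subst hp hq hr hs <;> constructor <;> linarith

/-- If the open segments representing two distinct edges of a graph drawn on the
hypercube `{0,1}^d` intersect, then the intersection point is the common midpoint
of the two segments. -/
theorem intersection_is_midpoint {V : Type*} (G : SimpleGraph V) (d : ℕ) (l : V → Fin d → ℝ)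
    (h01 : ∀ v i, l v i = 0 ∨ l v i = 1) (hinj : Function.Injective l)
    (v w x y : V) (hvw : G.Adj v w) (hxy : G.Adj x y) (hne : s(v, w) ≠ s(x, y))
    (z : Fin d → ℝ) (hz1 : z ∈ openSegment ℝ (l v) (l w)) (hz2 : z ∈ openSegment ℝ (l x) (l y)) :
    z = (1 / 2 : ℝ) • (l v + l w) ∧ z = (1 / 2 : ℝ) • (l x + l y) := by
  obtain ⟨a, b, ha, hb, hab, hz⟩ := hz1
  obtain ⟨c, e, hc, he, hce, hz'⟩ := hz2
  have hzi : ∀ i, z i = a * l v i + b * l w i := by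
    intro i
    rw [← hz]
    simp [Pi.add_apply, Pi.smul_apply, smul_eq_mul]
  have hzi' : ∀ i, z i = c * l x i + e * l y i := by
    intro i
    rw [← hz']
    simp [Pi.add_apply, Pi.smul_apply, smul_eq_mul]
  have ha1 : a < 1 := by linarith
  have hb1 : b < 1 := by linarith
  have hc1 : c < 1 := by linarith
  have he1 : e < 1 := by linarith
  have hvw' : l v ≠ l w := fun h => hvw.ne (hinj h)
  obtain ⟨i0, hi0⟩ := Function.ne_iff.mp hvw'
  -- z i0 is a nontrivial coefficient of the first segment
  have hz0 : z i0 = a ∨ z i0 = b := by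
    rcases h01 v i0 with h1 | h1 <;> rcases h01 w i0 with h2 | h2
    · exact absurd (h1.trans h2.symm) hi0
    · right; rw [hzi i0, h1, h2]; ring
    · left; rw [hzi i0, h1, h2]; ring
    · exact absurd (h1.trans h2.symm) hi0
  -- the second segment must also vary at i0
  have hzx : z i0 = c ∨ z i0 = e := by
    have h2 := hzi' i0
    rcases h01 x i0 with h1' | h1' <;> rcases h01 y i0 with h2' | h2'
    · rw [h1', h2'] at h2; rcases hz0 with h | h <;> linarith
    · right; rw [hzi' i0, h1', h2']; ring
    · left; rw [hzi' i0, h1', h2']; ring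
    · rw [h1', h2'] at h2; rcases hz0 with h | h <;> linarith
  have hkey : b = 1 / 2 := by
    by_contra hbne
    have hneab : a ≠ b := fun h => hbne (by linarith)
    have hbce : b = c ∨ b = e := by
      rcases hz0 with h | h <;> rcases hzx with h' | h' <;>
        first
          | (left; linarith)
          | (right; linarith)
    rcases hbce with hbc | hbe
    · -- l v = l y and l w = l x
      have h1 : ∀ i, l v i = l y i ∧ l w i = l x i := fun i =>
        aux_coord hab (by linarith : e + c = 1) ha hb he hc hneab hbc (hzi i)
          (by rw [hzi' i]; ring) (h01 v i) (h01 w i) (h01 y i) (h01 x i)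
      have hvy : v = y := hinj (funext fun i => (h1 i).1)
      have hwx : w = x := hinj (funext fun i => (h1 i).2)
      exact hne (by rw [hvy, hwx, Sym2.eq_swap])
    · -- l v = l x and l w = l y
      have h1 : ∀ i, l v i = l x i ∧ l w i = l y i := fun i =>
        aux_coord hab hce ha hb hc he hneab hbe (hzi i) (hzi' i)
          (h01 v i) (h01 w i) (h01 x i) (h01 y i)
      have hvx : v = x := hinj (funext fun i => (h1 i).1)
      have hwy : w = y := hinj (funext fun i => (h1 i).2)
      exact hne (by rw [hvx, hwy])
  have ha2 : a = 1 / 2 := by linarith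
  have hzhalf : z i0 = 1 / 2 := by rcases hz0 with h | h <;> linarith
  have he2 : e = 1 / 2 := by rcases hzx with h | h <;> linarith
  have hc2 : c = 1 / 2 := by linarith
  constructor <;> funext i
  · rw [hzi i, ha2, hkey]
    simp [Pi.smul_apply, Pi.add_apply, smul_eq_mul]
    ring
  · rw [hzi' i, hc2, he2]
    simp [Pi.smul_apply, Pi.add_apply, smul_eq_mul]
    ring
end
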